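/- Let n = m² for an integer m ≥ 2 and let A be an n×n real matrix. Then there exists a Monarch matrix M* minimizing ‖A − M‖_F over all Monarch matrices M, and the minimum value satisfies ‖A − M*‖_F² = Σ_{j,k=0}^{m−1} min_{B : rank(B) ≤ 1} ‖A_{jk} − B‖_F², where A_{jk} is the m×m matrix with A_{jk}[ℓ,i] = A[ℓ·m + j, k·m + i], and the inner minimum is over m×m real matrices B of rank at most 1 (this minimum is attained). -/

import Mathlib

open Matrix

/-- `BD b n R`: `R` is block-diagonal with `n/b` diagonal blocks of size `b × b`. -/
def BD (b n : ℕ) (R : Matrix (Fin n) (Fin n) ℝ) : Prop :=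
  ∀ i j : Fin n, i.val / b ≠ j.val / b → R i j = 0

/-- The permutation matrix `P_{(b,n)}`. -/
def permMat (b n : ℕ) : Matrix (Fin n) (Fin n) ℝ :=
  Matrix.of fun i j => if i.val = j.val % b * (n / b) + j.val / b then 1 else 0

/-- `M` is a Monarch matrix: `M = P L Pᵀ R` with `L, R ∈ BD(m, m²)`, `P = P_{(m,m²)}`. -/
def IsMonarch (m : ℕ) (M : Matrix (Fin (m * m)) (Fin (m * m)) ℝ) : Prop :=
  ∃ L R : Matrix (Fin (m * m)) (Fin (m * m)) ℝ,
    BD m (m * m) L ∧ BD m (m * m) R ∧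
    M = permMat m (m * m) * L * (permMat m (m * m))ᵀ * R

/-- Squared Frobenius norm. -/
noncomputable def frobSq {p q : ℕ} (X : Matrix (Fin p) (Fin q) ℝ) : ℝ :=
  ∑ i, ∑ j, (X i j) ^ 2

/-- Frobenius norm. -/
noncomputable def frobNorm {p q : ℕ} (X : Matrix (Fin p) (Fin q) ℝ) : ℝ :=
  Real.sqrt (frobSq X)

lemma idx_lt {m : ℕ} (a c : Fin m) : a.val * m + c.val < m * m := by
  have h1 : a.val + 1 ≤ m := a.isLt
  calc a.val * m + c.val < a.val * m + m := by omega
    _ = (a.val + 1) * m := by ring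
    _ ≤ m * m := Nat.mul_le_mul h1 le_rfl

/-- The `(j,k)` block of `A`: `A_{jk}[ℓ,i] = A[ℓm+j, km+i]`. -/
def blockOf {m : ℕ} (A : Matrix (Fin (m * m)) (Fin (m * m)) ℝ) (j k : Fin m) :
    Matrix (Fin m) (Fin m) ℝ :=
  Matrix.of fun ℓ i => A ⟨ℓ.val * m + j.val, idx_lt ℓ j⟩ ⟨k.val * m + i.val, idx_lt k i⟩

/-!
Block `(j, k)` of `P L Pᵀ R` is the outer product of column `k` of the `j`-th diagonal block of
`L` with row `j` of the `k`-th diagonal block of `R`, and as `L` and `R` vary these outer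
products range independently over all rank-one matrices. Since the squared Frobenius norm
splits over the blocks, a best Monarch approximation of `A` is assembled from best rank-one
approximations of the blocks `A_{jk}`; these exist because matrices of rank at most one form
a closed set (that of vanishing `2 × 2` minors) in a finite-dimensional normed space.
-/

section RankOne

variable {ι κ K : Type*} [Field K]

theorem exists_eq_vecMulVec_of_rank_le_one [Fintype κ] {B : Matrix ι κ K} (h : B.rank ≤ 1) :
    ∃ u v, B = vecMulVec u v := by
  classical
  obtain ⟨w, hw⟩ := finrank_le_one_iff.mp h
  choose c hc using fun j => hw ⟨B.mulVecLin (Pi.single j 1), LinearMap.mem_range_self _ _⟩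
  refine ⟨w, c, ?_⟩
  ext i j
  simpa [vecMulVec_apply, mulVec_single, mul_comm] using
    (congrFun (congrArg Subtype.val (hc j)) i).symm

theorem rank_le_one_iff_exists_eq_vecMulVec [Fintype κ] (B : Matrix ι κ K) :
    B.rank ≤ 1 ↔ ∃ u v, B = vecMulVec u v :=
  ⟨exists_eq_vecMulVec_of_rank_le_one, fun ⟨_, _, hB⟩ => hB ▸ rank_vecMulVec_le _ _⟩

theorem exists_eq_vecMulVec_iff_mul_eq_mul (B : Matrix ι κ K) :
    (∃ u v, B = vecMulVec u v) ↔ ∀ i j k l, B i j * B k l = B i l * B k j := by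
  refine ⟨fun ⟨u, v, hB⟩ i j k l => by simp only [hB, vecMulVec_apply]; ring, fun hB => ?_⟩
  by_cases hzero : B = 0
  · exact ⟨0, 0, by simp [hzero]⟩
  obtain ⟨p, hp⟩ := Function.ne_iff.mp hzero
  obtain ⟨q, hpq⟩ := Function.ne_iff.mp hp
  refine ⟨fun i => B i q, fun j => B p j / B p q, ?_⟩
  ext i j
  rw [vecMulVec_apply, mul_div_assoc', eq_div_iff hpq, hB i j p q]

theorem isClosed_setOf_rank_le_one [Fintype κ] [TopologicalSpace K] [T2Space K]
    [ContinuousMul K] :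
    IsClosed {B : Matrix ι κ K | B.rank ≤ 1} := by
  simp only [rank_le_one_iff_exists_eq_vecMulVec, exists_eq_vecMulVec_iff_mul_eq_mul,
    Set.ofPred_forall]
  refine isClosed_iInter fun i => isClosed_iInter fun j => isClosed_iInter fun k =>
    isClosed_iInter fun l => isClosed_eq ?_ ?_ <;> fun_prop

end RankOne

section Frobenius

attribute [local instance] Matrix.frobeniusNormedAddCommGroup Matrix.frobeniusNormedSpace

theorem frobSq_eq_norm_sq {p q : ℕ} (X : Matrix (Fin p) (Fin q) ℝ) : frobSq X = ‖X‖ ^ 2 := by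
  change _ = ‖WithLp.toLp 2 fun i => WithLp.toLp 2 fun j => X i j‖ ^ 2
  simp [frobSq, PiLp.norm_sq_eq_of_L2]

theorem exists_rank_le_one_frobSq_sub_le {p q : ℕ} (X : Matrix (Fin p) (Fin q) ℝ) :
    ∃ B : Matrix (Fin p) (Fin q) ℝ, B.rank ≤ 1 ∧
      ∀ B' : Matrix (Fin p) (Fin q) ℝ, B'.rank ≤ 1 → frobSq (X - B) ≤ frobSq (X - B') := by
  obtain ⟨B, hB, hdist⟩ :=
    isClosed_setOf_rank_le_one.exists_infDist_eq_dist ⟨0, by simp⟩ X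
  refine ⟨B, hB, fun B' hB' => ?_⟩
  rw [frobSq_eq_norm_sq, frobSq_eq_norm_sq, ← dist_eq_norm, ← dist_eq_norm]
  gcongr
  exact hdist ▸ Metric.infDist_le_dist_of_mem hB'

end Frobenius

theorem finProdFinEquiv_val_div {m n : ℕ} (p : Fin m × Fin n) :
    (finProdFinEquiv p).val / n = p.1 := by
  rw [finProdFinEquiv_apply_val, Nat.add_mul_div_left _ _ p.2.pos, Nat.div_eq_of_lt p.2.isLt,
    zero_add]

theorem finProdFinEquiv_val_mod {m n : ℕ} (p : Fin m × Fin n) :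
    (finProdFinEquiv p).val % n = p.2 := by
  rw [finProdFinEquiv_apply_val, Nat.add_mul_mod_self_left, Nat.mod_eq_of_lt p.2.isLt]

section Monarch

variable {m : ℕ}

local notation "e" => (finProdFinEquiv : Fin m × Fin m ≃ Fin (m * m))

theorem blockOf_apply (A : Matrix (Fin (m * m)) (Fin (m * m)) ℝ) (j k ℓ i : Fin m) :
    blockOf A j k ℓ i = A (e (ℓ, j)) (e (k, i)) := by
  simp only [blockOf, of_apply]
  congr 1 <;> ext <;> simp [add_comm, mul_comm]

theorem blockOf_sub (A M : Matrix (Fin (m * m)) (Fin (m * m)) ℝ) (j k : Fin m) :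
    blockOf (A - M) j k = blockOf A j k - blockOf M j k :=
  rfl

theorem frobSq_eq_sum_frobSq_blockOf (X : Matrix (Fin (m * m)) (Fin (m * m)) ℝ) :
    frobSq X = ∑ j, ∑ k, frobSq (blockOf X j k) := by
  simp only [frobSq, blockOf_apply, ← finProdFinEquiv.sum_comp, Fintype.sum_prod_type]
  rw [Finset.sum_comm]
  refine Finset.sum_congr rfl fun j _ => ?_
  rw [Finset.sum_comm]

theorem BD.apply_eq_zero {X : Matrix (Fin (m * m)) (Fin (m * m)) ℝ} (hX : BD m (m * m) X)
    {a a' : Fin m} (c c' : Fin m) (ha : a ≠ a') : X (e (a, c)) (e (a', c')) = 0 :=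
  hX _ _ <| by rw [finProdFinEquiv_val_div, finProdFinEquiv_val_div]; exact Fin.val_injective.ne ha

/-- The permutation `σ_{(m,m²)}`. -/
def digitSwap (m : ℕ) : Equiv.Perm (Fin (m * m)) :=
  finProdFinEquiv.permCongr (Equiv.prodComm (Fin m) (Fin m))

@[simp]
theorem digitSwap_apply (p : Fin m × Fin m) : digitSwap m (e p) = e p.swap := by
  simp [digitSwap, Equiv.permCongr_apply]

@[simp]
theorem digitSwap_symm_apply (p : Fin m × Fin m) : (digitSwap m).symm (e p) = e p.swap := by
  rw [Equiv.symm_apply_eq, digitSwap_apply, Prod.swap_swap]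

theorem permMat_eq_one_submatrix :
    permMat m (m * m) = (1 : Matrix (Fin (m * m)) (Fin (m * m)) ℝ).submatrix id (digitSwap m) := by
  ext x y
  obtain ⟨p, rfl⟩ := finProdFinEquiv.surjective x
  obtain ⟨q, rfl⟩ := finProdFinEquiv.surjective y
  have hm : 0 < m := p.1.pos
  simp only [permMat, of_apply, submatrix_apply, id, one_apply, Nat.mul_div_cancel _ hm,
    finProdFinEquiv_val_div, finProdFinEquiv_val_mod, digitSwap_apply]
  congr 1
  rw [← Fin.val_inj, finProdFinEquiv_apply_val q.swap, Prod.fst_swap, Prod.snd_swap,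
    Nat.mul_comm (q.2 : ℕ), Nat.add_comm (m * q.2)]

theorem permMat_mul_mul_transpose_mul (L R : Matrix (Fin (m * m)) (Fin (m * m)) ℝ) :
    permMat m (m * m) * L * (permMat m (m * m))ᵀ * R
      = L.submatrix (digitSwap m).symm (digitSwap m).symm * R := by
  rw [permMat_eq_one_submatrix, one_submatrix_mul, transpose_submatrix, transpose_one,
    mul_submatrix_one]
  rfl

theorem permMat_mul_mul_transpose_mul_apply {L R : Matrix (Fin (m * m)) (Fin (m * m)) ℝ}
    (hL : BD m (m * m) L) (hR : BD m (m * m) R) (ℓ j k i : Fin m) :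
    (permMat m (m * m) * L * (permMat m (m * m))ᵀ * R) (e (ℓ, j)) (e (k, i))
      = L (e (j, ℓ)) (e (j, k)) * R (e (k, j)) (e (k, i)) := by
  rw [permMat_mul_mul_transpose_mul, mul_apply, ← finProdFinEquiv.sum_comp,
    Fintype.sum_eq_single (k, j)]
  · simp
  rintro ⟨a, c⟩ hac
  by_cases hak : a = k
  · subst hak
    have hcj : j ≠ c := fun h => hac (by rw [h])
    simp [hL.apply_eq_zero ℓ a hcj]
  · simp [hR.apply_eq_zero c i hak]

theorem blockOf_permMat_mul_mul_transpose_mul {L R : Matrix (Fin (m * m)) (Fin (m * m)) ℝ}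
    (hL : BD m (m * m) L) (hR : BD m (m * m) R) (j k : Fin m) :
    blockOf (permMat m (m * m) * L * (permMat m (m * m))ᵀ * R) j k
      = vecMulVec (fun ℓ => L (e (j, ℓ)) (e (j, k))) (fun i => R (e (k, j)) (e (k, i))) := by
  ext ℓ i
  rw [blockOf_apply, permMat_mul_mul_transpose_mul_apply hL hR, vecMulVec_apply]

theorem IsMonarch.rank_blockOf_le_one {M : Matrix (Fin (m * m)) (Fin (m * m)) ℝ}
    (hM : IsMonarch m M) (j k : Fin m) : (blockOf M j k).rank ≤ 1 := by
  obtain ⟨L, R, hL, hR, rfl⟩ := hM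
  rw [blockOf_permMat_mul_mul_transpose_mul hL hR]
  exact rank_vecMulVec_le _ _

def blockDiagonalFin (D : Fin m → Matrix (Fin m) (Fin m) ℝ) :
    Matrix (Fin (m * m)) (Fin (m * m)) ℝ :=
  reindex ((Equiv.prodComm _ _).trans e) ((Equiv.prodComm _ _).trans e) (blockDiagonal D)

@[simp]
theorem blockDiagonalFin_apply (D : Fin m → Matrix (Fin m) (Fin m) ℝ) (p q : Fin m × Fin m) :
    blockDiagonalFin D (e p) (e q) = if p.1 = q.1 then D p.1 p.2 q.2 else 0 := by
  simp [blockDiagonalFin, blockDiagonal_apply]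

theorem bd_blockDiagonalFin (D : Fin m → Matrix (Fin m) (Fin m) ℝ) :
    BD m (m * m) (blockDiagonalFin D) := by
  intro x y hxy
  obtain ⟨p, rfl⟩ := finProdFinEquiv.surjective x
  obtain ⟨q, rfl⟩ := finProdFinEquiv.surjective y
  rw [finProdFinEquiv_val_div, finProdFinEquiv_val_div] at hxy
  rw [blockDiagonalFin_apply, if_neg fun h => hxy (congrArg Fin.val h)]

theorem exists_isMonarch_blockOf_eq_vecMulVec (u v : Fin m → Fin m → Fin m → ℝ) :
    ∃ M, IsMonarch m M ∧ ∀ j k, blockOf M j k = vecMulVec (u j k) (v j k) := by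
  let L := blockDiagonalFin fun j => of fun ℓ k => u j k ℓ
  let R := blockDiagonalFin fun k => of fun j i => v j k i
  refine ⟨_, ⟨L, R, bd_blockDiagonalFin _, bd_blockDiagonalFin _, rfl⟩, fun j k => ?_⟩
  rw [blockOf_permMat_mul_mul_transpose_mul (bd_blockDiagonalFin _) (bd_blockDiagonalFin _)]
  simp

end Monarch

theorem monarch_projection_general (m : ℕ)
    (A : Matrix (Fin (m * m)) (Fin (m * m)) ℝ) :
    ∃ Mstar : Matrix (Fin (m * m)) (Fin (m * m)) ℝ,
      IsMonarch m Mstar ∧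
      (∀ M, IsMonarch m M → frobNorm (A - Mstar) ≤ frobNorm (A - M)) ∧
      ∃ B : Fin m → Fin m → Matrix (Fin m) (Fin m) ℝ,
        (∀ j k : Fin m,
          (B j k).rank ≤ 1 ∧
          ∀ B' : Matrix (Fin m) (Fin m) ℝ, B'.rank ≤ 1 →
            frobSq (blockOf A j k - B j k) ≤ frobSq (blockOf A j k - B')) ∧
        frobSq (A - Mstar) = ∑ j, ∑ k, frobSq (blockOf A j k - B j k) := by
  choose B hBrank hBmin using fun j k => exists_rank_le_one_frobSq_sub_le (blockOf A j k)
  choose u v hBuv using fun j k => exists_eq_vecMulVec_of_rank_le_one (hBrank j k)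
  obtain ⟨Mstar, hMstar, hblock⟩ := exists_isMonarch_blockOf_eq_vecMulVec u v
  have hsplit : ∀ M, frobSq (A - M) = ∑ j, ∑ k, frobSq (blockOf A j k - blockOf M j k) := by
    intro M
    simp only [frobSq_eq_sum_frobSq_blockOf (A - M), blockOf_sub]
  refine ⟨Mstar, hMstar, fun M hM => ?_, B, fun j k => ⟨hBrank j k, hBmin j k⟩, ?_⟩
  · refine Real.sqrt_le_sqrt ?_
    rw [hsplit, hsplit]
    gcongr with j _ k _
    rw [hblock, ← hBuv]
    exact hBmin j k _ (hM.rank_blockOf_le_one j k)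
  · simp only [hsplit, hblock, ← hBuv]

/-- there is a Monarch matrix `M*` minimizing `‖A − M‖_F` over all Monarch
matrices, with minimal value `‖A − M*‖_F² = Σ_{j,k} min_{rank B ≤ 1} ‖A_{jk} − B‖_F²`,
each inner minimum being attained. -/
theorem monarch_projection (m : ℕ) (hm : 2 ≤ m)
    (A : Matrix (Fin (m * m)) (Fin (m * m)) ℝ) :
    ∃ Mstar : Matrix (Fin (m * m)) (Fin (m * m)) ℝ,
      IsMonarch m Mstar ∧
      (∀ M, IsMonarch m M → frobNorm (A - Mstar) ≤ frobNorm (A - M)) ∧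
      ∃ B : Fin m → Fin m → Matrix (Fin m) (Fin m) ℝ,
        (∀ j k : Fin m,
          (B j k).rank ≤ 1 ∧
          ∀ B' : Matrix (Fin m) (Fin m) ℝ, B'.rank ≤ 1 →
            frobSq (blockOf A j k - B j k) ≤ frobSq (blockOf A j k - B')) ∧
        frobSq (A - Mstar) = ∑ j, ∑ k, frobSq (blockOf A j k - B j k) :=
  monarch_projection_general m A
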